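/- arXiv:0805.2620 — 3 statements merged into one kernel-verified Lean document; each statement's English description precedes it below -/
import Mathlib

section
/- With the notation of the alternative algorithm (C = S\B, C1, C2, X = Attr2(C1∪C2,G), Z = X∩C, D the one-step escape set from Z together with X\Z, L = Attr1(D, G↾X)), the set Tr = S \ Attr1(B,G) satisfies Tr ∩ L = ∅, and hence Tr ⊆ Z \ L. -/
open Classical

universe u

structure GameGraph (S : Type u) where
  E : S → Set S
  S1 : Set S
  succ_nonempty : ∀ s, (E s).Nonempty

namespace GameGraph

variable {S : Type u} (G : GameGraph S)

/-- A (general, history-dependent) strategy: given a history and the current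
state, choose a successor. -/
abbrev Strat := { f : List S → S → S // ∀ h s, f h s ∈ G.E s }

open Classical in
/-- The pair (history so far, current state) after `n` steps of the play from
`s` where player 1 uses `σ` (at states of `S1`) and player 2 uses `π`. -/
noncomputable def playPair (σ π : List S → S → S) (s : S) : ℕ → List S × S
  | 0 => ([], s)
  | n+1 =>
      let p := playPair σ π s n
      (p.1 ++ [p.2], if p.2 ∈ G.S1 then σ p.1 p.2 else π p.1 p.2)

/-- The unique play `ω(s,σ,π)`. -/
noncomputable def play (σ π : List S → S → S) (s : S) (n : ℕ) : S :=
  (G.playPair σ π s n).2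

/-- Lift a memoryless strategy to a general one. -/
def liftML (f : S → S) : List S → S → S := fun _ s => f s

def Reach (T : Set S) : Set (ℕ → S) := { ω | ∃ k, ω k ∈ T }

def Safe (F : Set S) : Set (ℕ → S) := { ω | ∀ k, ω k ∈ F }

/-- States occurring infinitely often in a play. -/
def InfOcc (ω : ℕ → S) : Set S := { t | ∀ N, ∃ k, N ≤ k ∧ ω k = t }

def Buchi (B : Set S) : Set (ℕ → S) := { ω | (InfOcc ω ∩ B).Nonempty }

def coBuchi (C : Set S) : Set (ℕ → S) := { ω | InfOcc ω ⊆ C }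

/-- Winning set of player 1 for objective `Φ`. -/
def W1 (Φ : Set (ℕ → S)) : Set S :=
  { s | ∃ σ : G.Strat, ∀ π : G.Strat, (G.play σ.1 π.1 s) ∈ Φ }

/-- Winning set of player 2 for objective `Ψ`. -/
def W2 (Ψ : Set (ℕ → S)) : Set S :=
  { s | ∃ π : G.Strat, ∀ σ : G.Strat, (G.play σ.1 π.1 s) ∈ Ψ }

/-- `U` is closed for player 1: player-1 states of `U` have all successors in
`U`, player-2 states of `U` have some successor in `U`. -/
def Closed1 (U : Set S) : Prop :=
  (∀ s ∈ U ∩ G.S1, G.E s ⊆ U) ∧ (∀ s ∈ U \ G.S1, (G.E s ∩ U).Nonempty)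

/-- `U` is closed for player 2. -/
def Closed2 (U : Set S) : Prop :=
  (∀ s ∈ U \ G.S1, G.E s ⊆ U) ∧ (∀ s ∈ U ∩ G.S1, (G.E s ∩ U).Nonempty)

/-- The inductive attractor sequence for player 1. -/
def AttrSeq1 (U : Set S) : ℕ → Set S
  | 0 => U
  | n+1 => AttrSeq1 U n
      ∪ { s | s ∈ G.S1 ∧ (G.E s ∩ AttrSeq1 U n).Nonempty }
      ∪ { s | s ∉ G.S1 ∧ G.E s ⊆ AttrSeq1 U n }

/-- Player-1 attractor of `U`. -/
def Attr1 (U : Set S) : Set S := ⋃ n, G.AttrSeq1 U n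

/-- The inductive attractor sequence for player 2. -/
def AttrSeq2 (U : Set S) : ℕ → Set S
  | 0 => U
  | n+1 => AttrSeq2 U n
      ∪ { s | s ∉ G.S1 ∧ (G.E s ∩ AttrSeq2 U n).Nonempty }
      ∪ { s | s ∈ G.S1 ∧ G.E s ⊆ AttrSeq2 U n }

/-- Player-2 attractor of `U`. -/
def Attr2 (U : Set S) : Set S := ⋃ n, G.AttrSeq2 U n

/-- Player-1 attractor sequence computed inside the region `X`
(i.e. in the restricted game `G ↾ X`). -/
def AttrSeq1In (X U : Set S) : ℕ → Set S
  | 0 => U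
  | n+1 => AttrSeq1In X U n
      ∪ { s | s ∈ X ∧ s ∈ G.S1 ∧ (G.E s ∩ AttrSeq1In X U n).Nonempty }
      ∪ { s | s ∈ X ∧ s ∉ G.S1 ∧ G.E s ∩ X ⊆ AttrSeq1In X U n }

/-- Player-1 attractor of `U` inside the region `X`. -/
def Attr1In (X U : Set S) : Set S := ⋃ n, G.AttrSeq1In X U n

/-- Player-2 attractor sequence computed inside the region `X`. -/
def AttrSeq2In (X U : Set S) : ℕ → Set S
  | 0 => U
  | n+1 => AttrSeq2In X U n
      ∪ { s | s ∈ X ∧ s ∉ G.S1 ∧ (G.E s ∩ AttrSeq2In X U n).Nonempty }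
      ∪ { s | s ∈ X ∧ s ∈ G.S1 ∧ G.E s ∩ X ⊆ AttrSeq2In X U n }

/-- Player-2 attractor of `U` inside the region `X`. -/
def Attr2In (X U : Set S) : Set S := ⋃ n, G.AttrSeq2In X U n

end GameGraph

open GameGraph

/-
Tr, the complement of the player-1 attractor of B, is a trap for player 1: player 2 can keep
every play inside Tr ⊆ C. Hence every state of Tr belongs to C1 ∪ C2 ⊆ X, so Tr ⊆ Z, and no state
of Tr lets player 1 leave Z in one step, so Tr misses D. A player-1 trap inside X that misses D
misses every level of the attractor L = Attr1(D, G↾X), by induction on the level.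
-/

namespace GameGraph

variable {S : Type u} (G : GameGraph S)

/-- The paper's `C1 ∪ C2`: states of `C` from which player 2 can stay in `C` for one step. -/
def stay (C : Set S) : Set S :=
  { s | s ∈ G.S1 ∧ s ∈ C ∧ G.E s ⊆ C } ∪ { s | s ∉ G.S1 ∧ s ∈ C ∧ (G.E s ∩ C).Nonempty }

/-- The paper's `D` is `escape Z ∪ (X \ Z)`. -/
def escape (Z : Set S) : Set S :=
  { s | s ∈ G.S1 ∧ s ∈ Z ∧ (G.E s ∩ Zᶜ).Nonempty } ∪ { s | s ∉ G.S1 ∧ s ∈ Z ∧ G.E s ⊆ Zᶜ }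

variable {G}

lemma disjoint_stay_escape (Z : Set S) : Disjoint (G.stay Z) (G.escape Z) := by
  rw [Set.disjoint_left]
  rintro s (⟨h1, -, hsub⟩ | ⟨h2, -, t, ht, htZ⟩) (⟨h1', -, t', ht', ht'Z⟩ | ⟨h2', -, hsub'⟩)
  · exact ht'Z (hsub ht')
  · exact h2' h1
  · exact h2 h1'
  · exact hsub' ht htZ

lemma attrSeq1_mono (U : Set S) : Monotone (G.AttrSeq1 U) :=
  monotone_nat_of_le_succ fun _ _ hs => Or.inl (Or.inl hs)

lemma subset_attr1 (U : Set S) : U ⊆ G.Attr1 U :=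
  Set.subset_iUnion (G.AttrSeq1 U) 0

lemma subset_attr2 (U : Set S) : U ⊆ G.Attr2 U :=
  Set.subset_iUnion (G.AttrSeq2 U) 0

/-- Finite branching is what lets a player-2 state whose successors all lie in the attractor
enter it at a finite level. -/
lemma closed1_compl_attr1 (hE : ∀ s, (G.E s).Finite) (B : Set S) : G.Closed1 (G.Attr1 B)ᶜ := by
  constructor
  · rintro s ⟨hs, h1⟩ t ht htA
    obtain ⟨n, hn⟩ := Set.mem_iUnion.mp htA
    exact hs (Set.mem_iUnion.mpr ⟨n + 1, Or.inl (Or.inr ⟨h1, t, ht, hn⟩)⟩)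
  · rintro s ⟨hs, h2⟩
    by_contra hne
    have hsub : ((hE s).toFinset : Set S) ⊆ ⋃ n, G.AttrSeq1 B n := by
      intro t ht
      rw [Set.Finite.coe_toFinset] at ht
      by_contra htA
      exact hne ⟨t, ht, htA⟩
    obtain ⟨n, hn⟩ := (attrSeq1_mono B).directed_le.exists_mem_subset_of_finset_subset_biUnion hsub
    rw [Set.Finite.coe_toFinset] at hn
    exact hs (Set.mem_iUnion.mpr ⟨n + 1, Or.inr ⟨h2, hn⟩⟩)

lemma Closed1.subset_stay {U C : Set S} (hU : G.Closed1 U) (hUC : U ⊆ C) : U ⊆ G.stay C := by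
  intro s hs
  by_cases h1 : s ∈ G.S1
  · exact Or.inl ⟨h1, hUC hs, (hU.1 s ⟨hs, h1⟩).trans hUC⟩
  · obtain ⟨t, ht, htU⟩ := hU.2 s ⟨hs, h1⟩
    exact Or.inr ⟨h1, hUC hs, t, ht, hUC htU⟩

lemma Closed1.disjoint_attr1In {U X D : Set S} (hU : G.Closed1 U) (hUX : U ⊆ X)
    (hUD : Disjoint U D) : Disjoint U (G.Attr1In X D) := by
  suffices ∀ n, Disjoint U (G.AttrSeq1In X D n) from Set.disjoint_iUnion_right.mpr this
  intro n
  induction n with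
  | zero => exact hUD
  | succ n ih =>
    rw [Set.disjoint_left] at ih ⊢
    rintro s hs ((hn | ⟨-, h1, t, ht, htn⟩) | ⟨-, h2, hsub⟩)
    · exact ih hs hn
    · exact ih (hU.1 s ⟨hs, h1⟩ ht) htn
    · obtain ⟨t, ht, htU⟩ := hU.2 s ⟨hs, h2⟩
      exact ih htU (hsub ⟨ht, hUX htU⟩)

end GameGraph

/-- `Tr ∩ L = ∅`, and hence `Tr ⊆ Z \ L`. -/
theorem Tr_disjoint_L {S : Type u} [Finite S] (G : GameGraph S) (B : Set S) :
    let C : Set S := Bᶜ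
    let C1 : Set S := { s | s ∈ G.S1 ∧ s ∈ C ∧ G.E s ⊆ C }
    let C2 : Set S := { s | s ∉ G.S1 ∧ s ∈ C ∧ (G.E s ∩ C).Nonempty }
    let X : Set S := G.Attr2 (C1 ∪ C2)
    let Z : Set S := X ∩ C
    let D : Set S := { s | s ∈ G.S1 ∧ s ∈ Z ∧ (G.E s ∩ Zᶜ).Nonempty }
      ∪ { s | s ∉ G.S1 ∧ s ∈ Z ∧ G.E s ⊆ Zᶜ } ∪ (X \ Z)
    let L : Set S := G.Attr1In X D
    (G.Attr1 B)ᶜ ∩ L = ∅ ∧ (G.Attr1 B)ᶜ ⊆ Z \ L := by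
  intro C C1 C2 X Z D L
  have hTr : G.Closed1 (G.Attr1 B)ᶜ := closed1_compl_attr1 (fun _ => Set.toFinite _) B
  have hTrC : (G.Attr1 B)ᶜ ⊆ C := Set.compl_subset_compl.mpr (subset_attr1 B)
  have hTrX : (G.Attr1 B)ᶜ ⊆ X := (hTr.subset_stay hTrC).trans (subset_attr2 _)
  have hTrZ : (G.Attr1 B)ᶜ ⊆ Z := Set.subset_inter hTrX hTrC
  have hTrD : Disjoint (G.Attr1 B)ᶜ D :=
    Disjoint.union_right ((disjoint_stay_escape Z).mono_left (hTr.subset_stay hTrZ))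
      (Set.disjoint_sdiff_right.mono_left hTrZ)
  have hTrL : Disjoint (G.Attr1 B)ᶜ L := hTr.disjoint_attr1In hTrX hTrD
  exact ⟨Set.disjoint_iff_inter_eq_empty.mp hTrL,
    fun s hs => ⟨hTrZ hs, Set.disjoint_left.mp hTrL hs⟩⟩
end

section
/- Let G be a finite game graph with Büchi set B. Suppose S \ Attr1(B,G) = ∅, i.e., player 1 can force reaching B from every state. Then every state is winning for player 1 for the Büchi objective: W1(Buchi(B)) = S. -/
open Classical

universe u

open GameGraph

/-! The attractor strategy moves to a successor of strictly smaller attractor rank; since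
ranks are natural numbers, every play consistent with it visits `B` again from any position.
A finite state space then forces some state of `B` to recur infinitely often. -/

open Filter

lemma frequently_of_rank_lt {α : Type*} {ω : ℕ → α} {P : α → Prop} (r : α → ℕ)
    (hr : ∀ k, ¬ P (ω k) → r (ω (k + 1)) < r (ω k)) : ∃ᶠ k in atTop, P (ω k) := by
  by_contra hP
  obtain ⟨N, hN⟩ := eventually_atTop.mp (not_frequently.mp hP)
  exact not_strictAnti_of_wellFoundedLT (fun j => r (ω (N + j)))
    (strictAnti_nat_of_succ_lt fun j => hr _ (hN _ (Nat.le_add_right N j)))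

namespace GameGraph

variable {S : Type u}

lemma mem_infOcc_iff {ω : ℕ → S} {t : S} : t ∈ InfOcc ω ↔ ∃ᶠ k in atTop, ω k = t :=
  frequently_atTop.symm

lemma mem_buchi_of_frequently [Finite S] {ω : ℕ → S} {B : Set S}
    (h : ∃ᶠ k in atTop, ω k ∈ B) : ω ∈ Buchi B := by
  have h' : ∃ᶠ k in atTop, ∃ b ∈ B, ω k = b := h.mono fun _ hk => ⟨_, hk, rfl⟩
  obtain ⟨b, hb, hfreq⟩ := (B.toFinite.frequently_exists).mp h'
  exact ⟨b, mem_infOcc_iff.mpr hfreq, hb⟩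

variable (G : GameGraph S)

lemma play_succ_mem_E (σ π : G.Strat) (s : S) (n : ℕ) :
    G.play σ.1 π.1 s (n + 1) ∈ G.E (G.play σ.1 π.1 s n) := by
  change (if _ then _ else _) ∈ _
  split
  · exact σ.2 _ _
  · exact π.2 _ _

lemma play_liftML_succ_of_mem_S1 (f : S → S) (π : List S → S → S) (s : S) (n : ℕ)
    (hn : G.play (liftML f) π s n ∈ G.S1) :
    G.play (liftML f) π s (n + 1) = f (G.play (liftML f) π s n) :=
  if_pos hn

section Attractor

variable (B : Set S)

/-- Junk value `0` outside `Attr1 B`, where the set below is empty. -/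
noncomputable def attrRank (s : S) : ℕ := sInf {n | s ∈ G.AttrSeq1 B n}

variable {G B}

lemma attrRank_le {s : S} {n : ℕ} (hs : s ∈ G.AttrSeq1 B n) : G.attrRank B s ≤ n :=
  Nat.sInf_le hs

lemma mem_attr1_of_mem_attrSeq1 {s : S} {n : ℕ} (hs : s ∈ G.AttrSeq1 B n) : s ∈ G.Attr1 B :=
  Set.mem_iUnion.mpr ⟨n, hs⟩

lemma mem_attrSeq1_attrRank {s : S} (hs : s ∈ G.Attr1 B) : s ∈ G.AttrSeq1 B (G.attrRank B s) :=
  Nat.sInf_mem (Set.mem_iUnion.mp hs)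

lemma exists_attrRank_eq_succ {s : S} (hs : s ∈ G.Attr1 B) (hsB : s ∉ B) :
    ∃ n, G.attrRank B s = n + 1 ∧
      (s ∈ G.S1 ∧ (G.E s ∩ G.AttrSeq1 B n).Nonempty ∨ s ∉ G.S1 ∧ G.E s ⊆ G.AttrSeq1 B n) := by
  have hmem := mem_attrSeq1_attrRank hs
  obtain ⟨n, hn⟩ : ∃ n, G.attrRank B s = n + 1 :=
    Nat.exists_eq_add_one_of_ne_zero fun h0 => hsB (by rwa [h0] at hmem)
  have hprev : s ∉ G.AttrSeq1 B n := fun h => by have := attrRank_le h; omega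
  rw [hn] at hmem
  rcases hmem with (h | h) | h
  · exact absurd h hprev
  · exact ⟨n, hn, Or.inl h⟩
  · exact ⟨n, hn, Or.inr h⟩

variable (G B)

noncomputable def attrMove (s : S) : S :=
  if h : ∃ t ∈ G.E s, t ∈ G.Attr1 B ∧ G.attrRank B t < G.attrRank B s then h.choose
  else (G.succ_nonempty s).choose

lemma attrMove_mem_E (s : S) : G.attrMove B s ∈ G.E s := by
  unfold attrMove
  split
  · next h => exact h.choose_spec.1
  · exact (G.succ_nonempty s).choose_spec

variable {G B}

lemma attrMove_attrRank_lt {s : S} (hs : s ∈ G.Attr1 B) (hsB : s ∉ B) (hs1 : s ∈ G.S1) :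
    G.attrRank B (G.attrMove B s) < G.attrRank B s := by
  obtain ⟨n, hn, (⟨-, t, htE, ht⟩ | ⟨hs2, -⟩)⟩ := exists_attrRank_eq_succ hs hsB
  · have h : ∃ t ∈ G.E s, t ∈ G.Attr1 B ∧ G.attrRank B t < G.attrRank B s :=
      ⟨t, htE, mem_attr1_of_mem_attrSeq1 ht, hn ▸ Nat.lt_succ_of_le (attrRank_le ht)⟩
    unfold attrMove
    rw [dif_pos h]
    exact h.choose_spec.2.2
  · exact absurd hs1 hs2

lemma attrRank_lt_of_notMem_S1 {s t : S} (hs : s ∈ G.Attr1 B) (hsB : s ∉ B) (hs2 : s ∉ G.S1)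
    (ht : t ∈ G.E s) : G.attrRank B t < G.attrRank B s := by
  obtain ⟨n, hn, (⟨hs1, -⟩ | ⟨-, hsub⟩)⟩ := exists_attrRank_eq_succ hs hsB
  · exact absurd hs1 hs2
  · exact hn ▸ Nat.lt_succ_of_le (attrRank_le (hsub ht))

variable (G B)

noncomputable def attrStrat : G.Strat :=
  ⟨liftML (G.attrMove B), fun _ => G.attrMove_mem_E B⟩

variable {G B}

lemma play_attrStrat_attrRank_lt (π : G.Strat) (s : S) (k : ℕ)
    (hk : G.play (G.attrStrat B).1 π.1 s k ∈ G.Attr1 B)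
    (hkB : G.play (G.attrStrat B).1 π.1 s k ∉ B) :
    G.attrRank B (G.play (G.attrStrat B).1 π.1 s (k + 1)) <
      G.attrRank B (G.play (G.attrStrat B).1 π.1 s k) := by
  by_cases hS1 : G.play (G.attrStrat B).1 π.1 s k ∈ G.S1
  · rw [attrStrat, play_liftML_succ_of_mem_S1 G _ _ s k hS1]
    exact attrMove_attrRank_lt hk hkB hS1
  · exact attrRank_lt_of_notMem_S1 hk hkB hS1 (G.play_succ_mem_E _ π s k)

end Attractor

end GameGraph

/-- if player 1 can force reaching `B` from every state, then
every state is winning for player 1 for the Büchi objective. -/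
theorem attr1_full_W1_buchi {S : Type u} [Finite S] (G : GameGraph S)
    (B : Set S) (h : (G.Attr1 B)ᶜ = ∅) :
    G.W1 (Buchi B) = Set.univ := by
  have hall : ∀ s, s ∈ G.Attr1 B := Set.eq_univ_iff_forall.mp (Set.compl_empty_iff.mp h)
  refine Set.eq_univ_of_forall fun s => ⟨G.attrStrat B, fun π => ?_⟩
  apply mem_buchi_of_frequently
  exact frequently_of_rank_lt (G.attrRank B) fun k hkB =>
    play_attrStrat_attrRank_lt π s k (hall _) hkB
end

section
/- In the improved algorithm's forward-search iteration, let R be the set of states explored by the truncated BFS from the auxiliary source, F ⊆ R the BFS frontier, T = { s ∈ S2 ∩ F | E(s) ∩ R = ∅ } ∪ (S1 ∩ F), and A = Attr1((R ∩ B) ∪ T, G↾R). Then R \ A is a closed set for player 1 in G and (R \ A) ∩ B = ∅; consequently R \ A ⊆ W2(coBuchi(S\B)). -/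
/-!
A player-1 state of `R` outside the target is off the frontier (frontier player-1 states
belong to `T`), so all its successors lie in `R`; none lies in `A`, or the state would be
attracted. A player-2 state of `R \ A` likewise has a successor in `R \ A`. Thus player 2
can keep every play inside `R \ A` forever, and `R \ A` misses `B` since `R ∩ B` is part of
the target.
-/
open Classical

universe u

open GameGraph

namespace GameGraph

variable {S : Type u} (G : GameGraph S)

section Attractor

variable {X U : Set S}

lemma attrSeq1In_mono : Monotone (G.AttrSeq1In X U) :=
  monotone_nat_of_le_succ fun _ _ hs => Or.inl (Or.inl hs)

lemma subset_attr1In : U ⊆ G.Attr1In X U :=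
  fun _ hs => Set.mem_iUnion.2 ⟨0, hs⟩

lemma mem_attr1In_of_mem_S1 {s : S} (hX : s ∈ X) (h1 : s ∈ G.S1)
    (h : (G.E s ∩ G.Attr1In X U).Nonempty) : s ∈ G.Attr1In X U := by
  obtain ⟨t, ht, htA⟩ := h
  obtain ⟨n, hn⟩ := Set.mem_iUnion.1 htA
  exact Set.mem_iUnion.2 ⟨n + 1, Or.inl (Or.inr ⟨hX, h1, t, ht, hn⟩)⟩

lemma mem_attr1In_of_notMem_S1 [Finite S] {s : S} (hX : s ∈ X) (h1 : s ∉ G.S1)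
    (h : G.E s ∩ X ⊆ G.Attr1In X U) : s ∈ G.Attr1In X U := by
  have hfin := (G.E s ∩ X).toFinite
  rw [← hfin.coe_toFinset] at h
  obtain ⟨n, hn⟩ :=
    G.attrSeq1In_mono.directed_le.exists_mem_subset_of_finset_subset_biUnion h
  rw [hfin.coe_toFinset] at hn
  exact Set.mem_iUnion.2 ⟨n + 1, Or.inr ⟨hX, h1, hn⟩⟩

lemma closed1_diff_attr1In [Finite S] {R : Set S}
    (hR : ∀ s ∈ (R \ U) ∩ G.S1, G.E s ⊆ R) : G.Closed1 (R \ G.Attr1In R U) := by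
  constructor
  · rintro s ⟨⟨hsR, hsA⟩, hs1⟩ t ht
    have hsU : s ∉ U := fun hsU => hsA (G.subset_attr1In hsU)
    exact ⟨hR s ⟨⟨hsR, hsU⟩, hs1⟩ ht,
      fun htA => hsA (G.mem_attr1In_of_mem_S1 hsR hs1 ⟨t, ht, htA⟩)⟩
  · rintro s ⟨⟨hsR, hsA⟩, hs1⟩
    obtain ⟨t, ⟨ht, htR⟩, htA⟩ :=
      Set.not_subset.1 fun h => hsA (G.mem_attr1In_of_notMem_S1 hsR hs1 h)
    exact ⟨t, ht, htR, htA⟩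

end Attractor

section Plays

variable {V C : Set S}

lemma play_succ (σ π : List S → S → S) (s : S) (n : ℕ) :
    G.play σ π s (n + 1) =
      if G.play σ π s n ∈ G.S1 then σ (G.playPair σ π s n).1 (G.play σ π s n)
      else π (G.playPair σ π s n).1 (G.play σ π s n) :=
  rfl

variable {G}

lemma Closed1.exists_choice (hV : G.Closed1 V) :
    ∃ f : S → S, ∀ t, f t ∈ G.E t ∧ (t ∈ V \ G.S1 → f t ∈ V) := by
  have h : ∀ t, ∃ u ∈ G.E t, t ∈ V \ G.S1 → u ∈ V := fun t => by
    by_cases ht : t ∈ V \ G.S1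
    · obtain ⟨u, hu, huV⟩ := hV.2 t ht
      exact ⟨u, hu, fun _ => huV⟩
    · obtain ⟨u, hu⟩ := G.succ_nonempty t
      exact ⟨u, hu, fun h => absurd h ht⟩
  choose f hf using h
  exact ⟨f, fun t => hf t⟩

lemma Closed1.play_mem (hV : G.Closed1 V) {f : S → S} (hf : ∀ t ∈ V \ G.S1, f t ∈ V)
    (σ : G.Strat) {s : S} (hs : s ∈ V) (n : ℕ) : G.play σ.1 (liftML f) s n ∈ V := by
  induction n with
  | zero => exact hs
  | succ n ih =>
    rw [play_succ]
    split_ifs with h1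
    · exact hV.1 _ ⟨ih, h1⟩ (σ.2 _ _)
    · exact hf _ ⟨ih, h1⟩

lemma infOcc_subset_of_forall_mem {ω : ℕ → S} (h : ∀ n, ω n ∈ V) : InfOcc ω ⊆ V := by
  intro t ht
  obtain ⟨k, -, rfl⟩ := ht 0
  exact h k

lemma Closed1.subset_W2_coBuchi (hV : G.Closed1 V) (hVC : V ⊆ C) :
    V ⊆ G.W2 (coBuchi C) := by
  obtain ⟨f, hf⟩ := hV.exists_choice
  intro s hs
  refine ⟨⟨liftML f, fun _ t => (hf t).1⟩, fun σ => ?_⟩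
  exact (infOcc_subset_of_forall_mem (hV.play_mem (fun t ht => (hf t).2 ht) σ hs)).trans hVC

end Plays

end GameGraph

theorem forward_search_sound_general {S : Type u} [Finite S] (G : GameGraph S)
    (B R F : Set S) (hR : ∀ s ∈ R \ F, G.E s ⊆ R) :
    let T : Set S := { s | s ∉ G.S1 ∧ s ∈ F ∧ G.E s ∩ R = ∅ } ∪ (G.S1 ∩ F)
    let A : Set S := G.Attr1In R ((R ∩ B) ∪ T)
    G.Closed1 (R \ A) ∧ (R \ A) ∩ B = ∅ ∧ R \ A ⊆ G.W2 (coBuchi Bᶜ) := by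
  intro T A
  have hclosed : G.Closed1 (R \ A) := by
    refine G.closed1_diff_attr1In fun s ⟨⟨hsR, hsU⟩, hs1⟩ => hR s ⟨hsR, fun hsF => ?_⟩
    exact hsU (Or.inr (Or.inr ⟨hs1, hsF⟩))
  have hdisj : (R \ A) ∩ B = ∅ :=
    Set.eq_empty_of_forall_notMem fun s ⟨⟨hsR, hsA⟩, hsB⟩ =>
      hsA (G.subset_attr1In (Or.inl ⟨hsR, hsB⟩))
  exact ⟨hclosed, hdisj, hclosed.subset_W2_coBuchi
    (Set.subset_compl_iff_disjoint_right.2 (Set.disjoint_iff_inter_eq_empty.2 hdisj))⟩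

/-- in the forward-search step of the improved algorithm, with
explored region `R`, frontier `F`, `T` and `A = Attr1((R∩B) ∪ T, G↾R)`, the
set `R \ A` is player-1 closed, disjoint from `B`, and hence contained in
`W2(coBuchi (S\B))`. -/
theorem forward_search_sound {S : Type u} [Finite S] (G : GameGraph S)
    (B R F : Set S) (hF : F ⊆ R) (hR : ∀ s ∈ R \ F, G.E s ⊆ R) :
    let T : Set S := { s | s ∉ G.S1 ∧ s ∈ F ∧ G.E s ∩ R = ∅ } ∪ (G.S1 ∩ F)
    let A : Set S := G.Attr1In R ((R ∩ B) ∪ T)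
    G.Closed1 (R \ A) ∧ (R \ A) ∩ B = ∅ ∧ R \ A ⊆ G.W2 (coBuchi Bᶜ) :=
  forward_search_sound_general G B R F hR
end
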